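/- arXiv:2107.09207 — 3 statements merged into one kernel-verified Lean document; each statement's English description precedes it below -/
import Mathlib

section
/- Let X = diag(2,1,0) and Z_0 = diag(2,0,1) in R^{3×3}. For step size α ∈ (0,1), the Riemannian gradient descent iterates Z_{k+1} = R(Z_k − α P_{T_{Z_k}}(Z_k − X)) on the rank-2 matrix manifold satisfy Z_k = diag(2, 0, (1−α)^k), and hence Z_k converges to diag(2,0,0) as k → ∞. -/
/-!
All iterates stay diagonal with middle entry `0`, so they have rank at most `2` and the
retraction acts as the identity on them. On `diag(2, 0, t)` the tangent projection keeps the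
first and third rows and columns, so the residual `Z - X = diag(0, -1, t)` loses its
middle entry and `t` is just scaled by `1 - α`.
-/

open Matrix Filter Topology

theorem Matrix.rank_diagonal_le_card_sub_one {m R : Type*} [Fintype m] [DecidableEq m] [Field R]
    [DecidableEq R] (w : m → R) {i : m} (hi : w i = 0) :
    (diagonal w).rank ≤ Fintype.card m - 1 := by
  have := Fintype.card_subtype_lt (p := fun j => w j ≠ 0) (not_not.mpr hi)
  rw [rank_diagonal]
  omega

theorem rank_diagonal_fin_three_le_two (a c : ℝ) : (diagonal ![a, 0, c]).rank ≤ 2 :=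
  rank_diagonal_le_card_sub_one ![a, 0, c] (i := 1) rfl

theorem diagonal_sub_smul_tangentProj (α t : ℝ) :
    diagonal ![2, 0, t] - α • (diagonal ![1, 0, 1] * (diagonal ![2, 0, t] - diagonal ![2, 1, 0]) +
      (diagonal ![2, 0, t] - diagonal ![2, 1, 0]) * diagonal ![1, 0, 1] -
      diagonal ![1, 0, 1] * (diagonal ![2, 0, t] - diagonal ![2, 1, 0]) * diagonal ![1, 0, 1]) =
    diagonal ![2, 0, (1 - α) * t] := by
  simp only [diagonal_sub, diagonal_mul_diagonal, diagonal_add, ← diagonal_smul]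
  congr 1
  ext i
  fin_cases i <;> simp; ring

theorem tendsto_diagonal_pow {r : ℝ} (hr : |r| < 1) (a b : ℝ) :
    Tendsto (fun k : ℕ => diagonal ![a, b, r ^ k]) atTop (𝓝 (diagonal ![a, b, 0])) := by
  have hcont : Continuous fun t : ℝ => diagonal ![a, b, t] :=
    Continuous.matrix_diagonal (continuous_pi fun i => by fin_cases i <;> simp <;> fun_prop)
  exact (hcont.tendsto 0).comp (tendsto_pow_atTop_nhds_zero_of_abs_lt_one hr)

/-- For X = diag(2,1,0), Z₀ = diag(2,0,1) and step size α ∈ (0,1), the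
Riemannian gradient descent iterates on the rank-2 manifold are
Z_k = diag(2,0,(1−α)^k), converging to diag(2,0,0). -/
theorem example_spurious_convergence (α : ℝ) (hα : α ∈ Set.Ioo (0 : ℝ) 1)
    (R : Matrix (Fin 3) (Fin 3) ℝ → Matrix (Fin 3) (Fin 3) ℝ)
    (hR : ∀ W : Matrix (Fin 3) (Fin 3) ℝ, W.rank ≤ 2 → R W = W)
    (PT : Matrix (Fin 3) (Fin 3) ℝ → Matrix (Fin 3) (Fin 3) ℝ →
      Matrix (Fin 3) (Fin 3) ℝ)
    (hPT : ∀ t : ℝ, t ≠ 0 → ∀ Y,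
      PT (Matrix.diagonal ![2, 0, t]) Y =
        Matrix.diagonal ![1, 0, 1] * Y + Y * Matrix.diagonal ![1, 0, 1] -
          Matrix.diagonal ![1, 0, 1] * Y * Matrix.diagonal ![1, 0, 1])
    (X : Matrix (Fin 3) (Fin 3) ℝ) (hX : X = Matrix.diagonal ![2, 1, 0])
    (Z : ℕ → Matrix (Fin 3) (Fin 3) ℝ)
    (hZ0 : Z 0 = Matrix.diagonal ![2, 0, 1])
    (hZrec : ∀ k, Z (k + 1) = R (Z k - α • PT (Z k) (Z k - X))) :
    (∀ k, Z k = Matrix.diagonal ![2, 0, (1 - α) ^ k]) ∧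
      Filter.Tendsto Z Filter.atTop (nhds (Matrix.diagonal ![2, 0, 0])) := by
  obtain ⟨hα0, hα1⟩ := hα
  have hiterate : ∀ k, Z k = diagonal ![2, 0, (1 - α) ^ k] := by
    intro k
    induction k with
    | zero => simpa using hZ0
    | succ k ih =>
      have hne : (1 - α) ^ k ≠ 0 := pow_ne_zero k (by linarith)
      rw [hZrec, ih, hPT _ hne, hX, diagonal_sub_smul_tangentProj, ← pow_succ',
        hR _ (rank_diagonal_fin_three_le_two _ _)]
  refine ⟨hiterate, ?_⟩
  rw [funext hiterate]
  exact tendsto_diagonal_pow (abs_lt.mpr ⟨by linarith, by linarith⟩) 2 0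
end

section
/- Let S : [0,T] → R^{r×r} be symmetric and continuously differentiable with dS/dt ⪰ −σ_min(S) · S for all t, where σ_min(S(t)) > 0 on [0,T] and S(0) positive definite. Then σ_min(S(t)) ≥ σ_min(S(0)) / (1 + t·σ_min(S(0))) for all t ∈ [0,T]. -/
/-!
Fix `t` and a unit eigenvector `x` of `S t` for its least eigenvalue. The quadratic form
`f s = xᵀ S(s) x` dominates `σ_min(S s)`, with equality at `s = t`, so the hypothesis gives
`f' ≥ -σ_min(S s) f ≥ -f²` along the whole interval, i.e. `1 / f s - s` is nonincreasing.
Hence `1 / σ_min(S t) = 1 / f t ≤ 1 / f 0 + t ≤ 1 / σ_min(S 0) + t`. Working with the smooth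
function `f` instead of `σ_min ∘ S` avoids Dini derivatives altogether.
-/

open Matrix Set

namespace Matrix.IsHermitian

variable {n : Type*} [Fintype n] [DecidableEq n]

open scoped MatrixOrder ComplexOrder in
theorem posSemidef_sub_smul_one {𝕜 : Type*} [RCLike 𝕜] {A : Matrix n n 𝕜} (hA : A.IsHermitian)
    {c : ℝ} (hc : ∀ i, c ≤ hA.eigenvalues i) : (A - c • 1).PosSemidef := by
  have hle : algebraMap ℝ (Matrix n n 𝕜) c ≤ A := by
    rw [algebraMap_le_iff_le_spectrum hA.isSelfAdjoint, hA.spectrum_real_eq_range_eigenvalues]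
    rintro _ ⟨i, rfl⟩
    exact hc i
  rwa [Algebra.algebraMap_eq_smul_one] at hle

theorem iInf_eigenvalues_mul_dotProduct_self_le {A : Matrix n n ℝ} (hA : A.IsHermitian)
    (x : n → ℝ) : (⨅ i, hA.eigenvalues i) * (x ⬝ᵥ x) ≤ x ⬝ᵥ A *ᵥ x := by
  have hx := (hA.posSemidef_sub_smul_one fun i ↦
    ciInf_le (finite_range hA.eigenvalues).bddBelow i).dotProduct_mulVec_nonneg x
  simpa [sub_mulVec, smul_mulVec, dotProduct_smul] using hx

theorem exists_dotProduct_mulVec_eq_iInf_eigenvalues [Nonempty n] {A : Matrix n n ℝ}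
    (hA : A.IsHermitian) : ∃ x : n → ℝ, x ⬝ᵥ x = 1 ∧ x ⬝ᵥ A *ᵥ x = ⨅ i, hA.eigenvalues i := by
  obtain ⟨i, hi⟩ := exists_eq_ciInf_of_finite (f := hA.eigenvalues)
  refine ⟨hA.eigenvectorBasis i, ?_, ?_⟩
  · have h := real_inner_self_eq_norm_sq (hA.eigenvectorBasis i)
    rw [hA.eigenvectorBasis.orthonormal.1 i, EuclideanSpace.inner_eq_star_dotProduct] at h
    simpa using h
  · simpa [hi] using (hA.eigenvalues_eq i).symm

end Matrix.IsHermitian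

theorem hasDerivAt_dotProduct_mulVec {𝕜 n : Type*} [NontriviallyNormedField 𝕜] [Fintype n]
    {M M' : 𝕜 → Matrix n n 𝕜} {t : 𝕜} (hM : ∀ i j, HasDerivAt (fun s ↦ M s i j) (M' t i j) t)
    (x y : n → 𝕜) : HasDerivAt (fun s ↦ x ⬝ᵥ M s *ᵥ y) (x ⬝ᵥ M' t *ᵥ y) t := by
  simp only [dotProduct, mulVec]
  exact HasDerivAt.fun_sum fun i _ ↦
    (HasDerivAt.fun_sum fun j _ ↦ (hM i j).mul_const (y j)).const_mul (x i)

theorem inv_sub_inv_le_sub_of_neg_sq_le_deriv {f f' : ℝ → ℝ} {a b : ℝ} (hab : a ≤ b)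
    (hf : ∀ s ∈ Icc a b, HasDerivAt f (f' s) s) (hpos : ∀ s ∈ Icc a b, 0 < f s)
    (hf' : ∀ s ∈ Icc a b, -f s ^ 2 ≤ f' s) : (f b)⁻¹ - (f a)⁻¹ ≤ b - a := by
  have hg : ∀ s ∈ Icc a b, HasDerivAt (fun u ↦ (f u)⁻¹ - u) (-f' s / f s ^ 2 - 1) s :=
    fun s hs ↦ ((hf s hs).fun_inv (hpos s hs).ne').sub (hasDerivAt_id' s)
  have hanti : AntitoneOn (fun u ↦ (f u)⁻¹ - u) (Icc a b) := by
    refine antitoneOn_of_hasDerivWithinAt_nonpos (convex_Icc a b)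
      (fun s hs ↦ (hg s hs).continuousAt.continuousWithinAt)
      (fun s hs ↦ (hg s (interior_subset hs)).hasDerivWithinAt) fun s hs ↦ ?_
    replace hs := interior_subset hs
    rw [sub_nonpos, neg_div, neg_le, le_div_iff₀ (pow_pos (hpos s hs) 2)]
    linarith [hf' s hs]
  linarith [hanti ⟨le_rfl, hab⟩ ⟨hab, le_rfl⟩ hab]

theorem div_one_add_mul_le_of_inv_le_inv_add {a b t : ℝ} (ha : 0 < a) (hb : 0 < b)
    (h : b⁻¹ ≤ a⁻¹ + t) : a / (1 + t * a) ≤ b := by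
  have hsum : a / (1 + t * a) = (a⁻¹ + t)⁻¹ := by field_simp
  rw [hsum, ← inv_inv b]
  exact inv_anti₀ (inv_pos.2 hb) h

theorem eigmin_rescaled_lower_bound_general (r : ℕ) (T : ℝ)
    (S S' : ℝ → Matrix (Fin r) (Fin r) ℝ)
    (hderiv : ∀ t, ∀ i j, HasDerivAt (fun s => S s i j) (S' t i j) t)
    (hherm : ∀ t, (S t).IsHermitian)
    (hineq : ∀ t ∈ Set.Icc (0 : ℝ) T,
      (S' t + (⨅ i, (hherm t).eigenvalues i) • S t).PosSemidef)
    (hpos : ∀ t ∈ Set.Icc (0 : ℝ) T, 0 < ⨅ i, (hherm t).eigenvalues i) :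
    ∀ t ∈ Set.Icc (0 : ℝ) T,
      (⨅ i, (hherm 0).eigenvalues i) /
          (1 + t * ⨅ i, (hherm 0).eigenvalues i) ≤
        ⨅ i, (hherm t).eigenvalues i := by
  intro t ht
  have : Nonempty (Fin r) :=
    not_isEmpty_iff.mp fun _ ↦ (hpos t ht).ne' (Real.iInf_of_isEmpty _)
  obtain ⟨x, hx_unit, hx_min⟩ := (hherm t).exists_dotProduct_mulVec_eq_iInf_eigenvalues
  have hsub : Icc 0 t ⊆ Icc 0 T := Icc_subset_Icc_right ht.2
  have h0 : (0 : ℝ) ∈ Icc 0 T := hsub ⟨le_rfl, ht.1⟩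
  have hmin_le : ∀ s, ⨅ i, (hherm s).eigenvalues i ≤ x ⬝ᵥ S s *ᵥ x := fun s ↦ by
    simpa [hx_unit] using (hherm s).iInf_eigenvalues_mul_dotProduct_self_le x
  have hderiv_ge : ∀ s ∈ Icc 0 T, -(x ⬝ᵥ S s *ᵥ x) ^ 2 ≤ x ⬝ᵥ S' s *ᵥ x := fun s hs ↦ by
    have h := (hineq s hs).dotProduct_mulVec_nonneg x
    simp only [star_trivial, add_mulVec, smul_mulVec, dotProduct_add, dotProduct_smul,
      smul_eq_mul] at h
    nlinarith [hmin_le s, hpos s hs]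
  have hcomp := inv_sub_inv_le_sub_of_neg_sq_le_deriv ht.1
    (fun s _ ↦ hasDerivAt_dotProduct_mulVec (hderiv s) x x)
    (fun s hs ↦ (hpos s (hsub hs)).trans_le (hmin_le s)) (fun s hs ↦ hderiv_ge s (hsub hs))
  have hinv0 := inv_anti₀ (hpos 0 h0) (hmin_le 0)
  rw [hx_min] at hcomp
  exact div_one_add_mul_le_of_inv_le_inv_add (hpos 0 h0) (hpos t ht) (by linarith)

/-- If S : [0,T] → Sym(r) is C¹ with dS/dt ⪰ −σ_min(S)·S, σ_min(S(t)) > 0 on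
[0,T] and S(0) positive definite, then
σ_min(S(t)) ≥ σ_min(S(0))/(1 + t·σ_min(S(0))). -/
theorem eigmin_rescaled_lower_bound (r : ℕ) (hr : 0 < r) (T : ℝ) (hT : 0 ≤ T)
    (S S' : ℝ → Matrix (Fin r) (Fin r) ℝ)
    (hderiv : ∀ t, ∀ i j, HasDerivAt (fun s => S s i j) (S' t i j) t)
    (hcont : Continuous S')
    (hherm : ∀ t, (S t).IsHermitian)
    (hineq : ∀ t ∈ Set.Icc (0 : ℝ) T,
      (S' t + (⨅ i, (hherm t).eigenvalues i) • S t).PosSemidef)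
    (hpos : ∀ t ∈ Set.Icc (0 : ℝ) T, 0 < ⨅ i, (hherm t).eigenvalues i)
    (hpd : (S 0).PosDef) :
    ∀ t ∈ Set.Icc (0 : ℝ) T,
      (⨅ i, (hherm 0).eigenvalues i) /
          (1 + t * ⨅ i, (hherm 0).eigenvalues i) ≤
        ⨅ i, (hherm t).eigenvalues i :=
  eigmin_rescaled_lower_bound_general r T S S' hderiv hherm hineq hpos
end

section
/- Let X = Σ_{i=1}^r d_i u_i u_i^T be symmetric PSD of rank r with distinct positive eigenvalues, and let Z_# = U_# S_# U_#^T be a rank-(r−1) spurious critical point with U_# = (U_1, U_3)P_#^T, S_# = P_# diag(D_1, 0) P_#^T, U_3 ⊥ (u_1,...,u_r), where U_1 = (u_1,...,u_{r−1}), D_1 = diag(d_1,...,d_{r−1}). Define the linear map L(ξ_1) = −(U_# ξ_1^T + ξ_1 U_#^T) X U_# p_{#,r} p_{#,r}^T + P_{U_#}^⊥ X ξ_1 p_{#,r} p_{#,r}^T on ξ_1 ∈ R^{n×r}, where p_{#,r} is the r-th column of P_#. Then ξ_1 = u_r p_{#,r}^T satisfies L(ξ_1) = d_r · ξ_1; i.e.,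 ξ_1 is an eigenvector of L with eigenvalue d_r > 0. -/
/-!
Write `ξ = u_r p_rᵀ`. Since `X` is symmetric with `X u_r = d_r u_r`, and `u_r` is orthogonal to
every column of `U_#`, both terms `U_# ξᵀ X U_#` and `ξ U_#ᵀ X U_#` vanish: the first because
`u_rᵀ X U_# = d_r u_rᵀ U_# = 0`, the second because `U_# p_r = U_3`
(`P_#` being orthogonal) lies in the kernel of `X`.
The projection term is `P_{U_#}^⊥ X ξ p_r p_rᵀ = d_r u_r (p_rᵀ p_r) p_rᵀ = d_r ξ`.
-/

open Matrix

namespace Matrix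

variable {R : Type*} [CommRing R] {n k ι : Type*} [Fintype ι]

section Spectral

variable (d : ι → R) (u : ι → n → R)

theorem isSymm_sum_smul_vecMulVec : (∑ i, d i • vecMulVec (u i) (u i)).IsSymm := by
  simp only [IsSymm, transpose_sum, transpose_smul, transpose_vecMulVec]

variable [Fintype n]

theorem sum_smul_vecMulVec_mulVec (w : n → R) :
    (∑ i, d i • vecMulVec (u i) (u i)) *ᵥ w = ∑ i, (d i * (u i ⬝ᵥ w)) • u i := by
  simp only [sum_mulVec, smul_mulVec, vecMulVec_mulVec, op_smul_eq_smul, smul_smul]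

theorem sum_smul_vecMulVec_mulVec_of_orthonormal [DecidableEq ι]
    (hu : ∀ i j, u i ⬝ᵥ u j = if i = j then (1 : R) else 0) (j : ι) :
    (∑ i, d i • vecMulVec (u i) (u i)) *ᵥ u j = d j • u j := by
  rw [sum_smul_vecMulVec_mulVec, Finset.sum_eq_single j] <;> simp +contextual [hu]

theorem sum_smul_vecMulVec_mulVec_eq_zero {w : n → R} (hw : ∀ i, u i ⬝ᵥ w = 0) :
    (∑ i, d i • vecMulVec (u i) (u i)) *ᵥ w = 0 := by
  simp [sum_smul_vecMulVec_mulVec, hw]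

end Spectral

variable [Fintype k]

theorem mul_transpose_mulVec_col [DecidableEq k] {W : Matrix n k R} {P : Matrix k k R}
    (hP : Pᵀ * P = 1) (j : k) :
    (W * Pᵀ) *ᵥ P.col j = W.col j := by
  rw [← mulVec_single_one P, mulVec_mulVec, Matrix.mul_assoc, hP, Matrix.mul_one,
    mulVec_single_one]

theorem col_dotProduct_col_self [DecidableEq k] {P : Matrix k k R} (hP : Pᵀ * P = 1) (j : k) :
    P.col j ⬝ᵥ P.col j = 1 := by
  have h := congrFun (congrFun hP j) j
  rw [mul_apply', one_apply_eq] at h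
  exact h

variable [Fintype n] [DecidableEq n]

/-- The map `L` of the paper, with `U = U_#` and `p = p_{#,r}`. -/
def escapeMap (U : Matrix n k R) (X : Matrix n n R) (p : k → R) (ξ : Matrix n k R) :
    Matrix n k R :=
  -((U * ξᵀ + ξ * Uᵀ) * X * U * vecMulVec p p) + (1 - U * Uᵀ) * X * ξ * vecMulVec p p

theorem escapeMap_vecMulVec {X : Matrix n n R} (hX : X.IsSymm) {U : Matrix n k R} {v : n → R}
    {p : k → R} {c : R} (hXv : X *ᵥ v = c • v) (hXUp : X *ᵥ (U *ᵥ p) = 0)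
    (hUv : Uᵀ *ᵥ v = 0) (hp : p ⬝ᵥ p = 1) :
    escapeMap U X p (vecMulVec v p) = c • vecMulVec v p := by
  have hvX : v ᵥ* X = c • v := by rw [← hX.eq, vecMul_transpose, hXv]
  have hUpX : (U *ᵥ p) ᵥ* X = 0 := by rw [← hX.eq, vecMul_transpose, hXUp]
  have hvU : v ᵥ* U = 0 := by rw [← mulVec_transpose, hUv]
  have hcross : (U * (vecMulVec v p)ᵀ + vecMulVec v p * Uᵀ) * X * U = 0 := by
    rw [Matrix.add_mul, Matrix.add_mul, transpose_vecMulVec, mul_vecMulVec, vecMulVec_mul,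
      vecMulVec_mul, hvX, smul_vecMul, hvU, smul_zero, vecMulVec_mul, vecMulVec_mul,
      vecMulVec_mul, vecMul_transpose, hUpX, zero_vecMul]
    ext i j
    simp [vecMulVec_apply]
  have hproj : (1 - U * Uᵀ) * X * vecMulVec v p = c • vecMulVec v p := by
    rw [Matrix.mul_assoc, mul_vecMulVec, mul_vecMulVec, hXv, Matrix.sub_mulVec, one_mulVec,
      ← mulVec_mulVec, mulVec_smul, hUv, smul_zero, mulVec_zero, sub_zero, smul_vecMulVec]
  rw [escapeMap, hcross, Matrix.zero_mul, neg_zero, zero_add, hproj, Matrix.smul_mul,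
    vecMulVec_mul_vecMulVec, hp, one_smul]

end Matrix

theorem escape_direction_eigenvector_general (n m : ℕ)
    (d : Fin (m + 1) → ℝ)
    (u : Fin (m + 1) → Fin n → ℝ)
    (hu : ∀ i j, u i ⬝ᵥ u j = if i = j then (1 : ℝ) else 0)
    (U3 : Fin n → ℝ) (hU3u : ∀ i, U3 ⬝ᵥ u i = 0)
    (Ph : Matrix (Fin (m + 1)) (Fin (m + 1)) ℝ)
    (hPh : Phᵀ * Ph = 1 ∧ Ph * Phᵀ = 1)
    (X : Matrix (Fin n) (Fin n) ℝ)
    (hX : X = ∑ i, d i • Matrix.vecMulVec (u i) (u i))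
    (W : Matrix (Fin n) (Fin (m + 1)) ℝ)
    (hW : W = Matrix.of fun a b => if b = Fin.last m then U3 a else u b a)
    (Uh : Matrix (Fin n) (Fin (m + 1)) ℝ) (hUh : Uh = W * Phᵀ)
    (pr : Fin (m + 1) → ℝ) (hpr : pr = fun i => Ph i (Fin.last m))
    (ξ : Matrix (Fin n) (Fin (m + 1)) ℝ)
    (hξ : ξ = Matrix.vecMulVec (u (Fin.last m)) pr) :
    -((Uh * ξᵀ + ξ * Uhᵀ) * X * Uh * Matrix.vecMulVec pr pr) +
        (1 - Uh * Uhᵀ) * X * ξ * Matrix.vecMulVec pr pr =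
      d (Fin.last m) • ξ := by
  replace hpr : pr = Ph.col (Fin.last m) := hpr
  subst hX hUh hpr hξ
  have hWcol : ∀ b, W.col b = if b = Fin.last m then U3 else u b := by
    intro b
    ext a
    split_ifs <;> simp_all [col]
  have hWu : Wᵀ *ᵥ u (Fin.last m) = 0 := by
    ext b
    rw [mulVec, ← col, hWcol]
    split_ifs with hb
    · exact hU3u _
    · simpa [hb] using hu b (Fin.last m)
  refine escapeMap_vecMulVec (isSymm_sum_smul_vecMulVec d u)
    (sum_smul_vecMulVec_mulVec_of_orthonormal d u hu _) ?_ ?_ (col_dotProduct_col_self hPh.1 _)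
  · rw [mul_transpose_mulVec_col hPh.1, hWcol, if_pos rfl]
    exact sum_smul_vecMulVec_mulVec_eq_zero d u fun i => by rw [dotProduct_comm, hU3u]
  · rw [transpose_mul, transpose_transpose, ← mulVec_mulVec, hWu, mulVec_zero]

/-- At a rank-(r−1) spurious critical point of a rank-r SPSD matrix X with
distinct positive eigenvalues, ξ = u_r p_{#,r}ᵀ is an eigenvector of the
linear map L with eigenvalue d_r > 0. -/
theorem escape_direction_eigenvector (n m : ℕ)
    (d : Fin (m + 1) → ℝ) (hd : ∀ i, 0 < d i) (hdistinct : StrictAnti d)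
    (u : Fin (m + 1) → Fin n → ℝ)
    (hu : ∀ i j, u i ⬝ᵥ u j = if i = j then (1 : ℝ) else 0)
    (U3 : Fin n → ℝ) (hU3 : U3 ⬝ᵥ U3 = 1) (hU3u : ∀ i, U3 ⬝ᵥ u i = 0)
    (Ph : Matrix (Fin (m + 1)) (Fin (m + 1)) ℝ)
    (hPh : Phᵀ * Ph = 1 ∧ Ph * Phᵀ = 1)
    (X : Matrix (Fin n) (Fin n) ℝ)
    (hX : X = ∑ i, d i • Matrix.vecMulVec (u i) (u i))
    (W : Matrix (Fin n) (Fin (m + 1)) ℝ)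
    (hW : W = Matrix.of fun a b => if b = Fin.last m then U3 a else u b a)
    (Uh : Matrix (Fin n) (Fin (m + 1)) ℝ) (hUh : Uh = W * Phᵀ)
    (pr : Fin (m + 1) → ℝ) (hpr : pr = fun i => Ph i (Fin.last m))
    (ξ : Matrix (Fin n) (Fin (m + 1)) ℝ)
    (hξ : ξ = Matrix.vecMulVec (u (Fin.last m)) pr) :
    -((Uh * ξᵀ + ξ * Uhᵀ) * X * Uh * Matrix.vecMulVec pr pr) +
        (1 - Uh * Uhᵀ) * X * ξ * Matrix.vecMulVec pr pr =
      d (Fin.last m) • ξ :=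
  escape_direction_eigenvector_general n m d u hu U3 hU3u Ph hPh X hX W hW Uh hUh pr hpr ξ hξ
end
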